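/- arXiv:2311.00345 — 5 statements merged into one kernel-verified Lean document; each statement's English description precedes it below -/
import Mathlib

section
/- A Hausdorff topological group G is ω-balanced and a q-space if and only if for each open neighborhood O of the identity in G there is a countably compact invariant (normal) subgroup H which is of countable character in G, such that H ⊆ O, the canonical quotient mapping p : G → G/H is quasi-perfect, and the quotient space G/H is metrizable. -/
open Filter Topology Set Pointwise TopologicalSpace

universe u

section Defs

variable {X : Type*}

/-- A subset `s` of a topological space is countably compact (in the ambient space) if every
countable open cover of `s` (indexed by `ℕ`) has a finite subcover. -/
def IsCountablyCompactIn [TopologicalSpace X] (s : Set X) : Prop :=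
  ∀ U : ℕ → Set X, (∀ n, IsOpen (U n)) → s ⊆ ⋃ n, U n → ∃ t : Finset ℕ, s ⊆ ⋃ n ∈ t, U n

/-- `U` is a q-sequence at `x`: a sequence of open neighbourhoods of `x` such that every
sequence of points chosen from the `U n` has an accumulation (cluster) point in `X`. -/
def IsQSequenceAt [TopologicalSpace X] (x : X) (U : ℕ → Set X) : Prop :=
  (∀ n, IsOpen (U n) ∧ x ∈ U n) ∧
    ∀ u : ℕ → X, (∀ n, u n ∈ U n) → ∃ p : X, MapClusterPt p Filter.atTop u

/-- A space is a q-space if every point has a q-sequence. -/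
def QSpace (X : Type*) [TopologicalSpace X] : Prop :=
  ∀ x : X, ∃ U : ℕ → Set X, IsQSequenceAt x U

/-- A space is a strict q-space if every point has a q-sequence whose intersection is
sequentially compact. -/
def StrictQSpace (X : Type*) [TopologicalSpace X] : Prop :=
  ∀ x : X, ∃ U : ℕ → Set X, IsQSequenceAt x U ∧ IsSeqCompact (⋂ n, U n)

/-- `U` is a strong q-sequence at `x`: a sequence of open neighbourhoods of `x` such that every
sequence of points chosen from the `U n` has a convergent subsequence. -/
def IsStrongQSequenceAt [TopologicalSpace X] (x : X) (U : ℕ → Set X) : Prop :=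
  (∀ n, IsOpen (U n) ∧ x ∈ U n) ∧
    ∀ u : ℕ → X, (∀ n, u n ∈ U n) →
      ∃ (p : X) (φ : ℕ → ℕ), StrictMono φ ∧ Filter.Tendsto (u ∘ φ) Filter.atTop (nhds p)

/-- A space is a strong q-space if every point has a strong q-sequence. -/
def StrongQSpace (X : Type*) [TopologicalSpace X] : Prop :=
  ∀ x : X, ∃ U : ℕ → Set X, IsStrongQSequenceAt x U

/-- A subset `A` is of countable character in `X` if there is a countable family of open
neighbourhoods of `A` such that every open neighbourhood of `A` contains a member of it. -/
def HasCountableCharacter [TopologicalSpace X] (A : Set X) : Prop :=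
  ∃ U : ℕ → Set X, (∀ n, IsOpen (U n) ∧ A ⊆ U n) ∧
    ∀ W : Set X, IsOpen W → A ⊆ W → ∃ n, U n ⊆ W

/-- A topological group is ω-balanced if for every neighbourhood `U` of the identity there is
a countable family `γ` of open neighbourhoods of the identity such that for every `x` some
`V ∈ γ` satisfies `xVx⁻¹ ⊆ U`. -/
def OmegaBalanced (G : Type*) [Group G] [TopologicalSpace G] : Prop :=
  ∀ U : Set G, U ∈ nhds (1 : G) → ∃ γ : Set (Set G), γ.Countable ∧
    (∀ V ∈ γ, IsOpen V ∧ (1 : G) ∈ V) ∧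
    ∀ x : G, ∃ V ∈ γ, ∀ v ∈ V, x * v * x⁻¹ ∈ U

/-- A topological group is ω-narrow if for every open neighbourhood `V` of the identity there
is a countable set `A` with `A * V = G`. -/
def OmegaNarrow (G : Type*) [Group G] [TopologicalSpace G] : Prop :=
  ∀ V : Set G, IsOpen V → (1 : G) ∈ V → ∃ A : Set G, A.Countable ∧ A * V = Set.univ

/-- A topological group is feathered if it has a nonempty compact subset of countable
character. -/
def IsFeathered (G : Type*) [Group G] [TopologicalSpace G] : Prop :=
  ∃ K : Set G, K.Nonempty ∧ IsCompact K ∧ HasCountableCharacter K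

/-- A subgroup `H` of a topological group is neutral if for every open neighbourhood `U` of the
identity there is an open neighbourhood `V` of the identity with `HV ⊆ UH`. -/
def IsNeutralSubgroup {G : Type*} [Group G] [TopologicalSpace G] (H : Subgroup G) : Prop :=
  ∀ U : Set G, IsOpen U → (1 : G) ∈ U →
    ∃ V : Set G, IsOpen V ∧ (1 : G) ∈ V ∧ (H : Set G) * V ⊆ U * (H : Set G)

end Defs


/-!
Let `Q` be a q-sequence at `1`. Using ω-balancedness, one builds symmetric open neighbourhoods
`V n ⊆ O ∩ Q n` of `1` with `V (n + 1) * V (n + 1) ⊆ V n` that eventually refine every countable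
family witnessing ω-balancedness of some `V k`. Then `H = ⋂ n, V n` is a closed normal subgroup, and
every sequence with `u n ∈ V n` clusters at a point of `H`. This single property yields countable
compactness of `H` and of its cosets, countable character of `H`, closedness of `F * H` for closed
`F`, and a countable base at `1` in `G ⧸ H`, which is therefore metrizable.

Conversely, the metrizable quotient `G ⧸ H` is first countable, hence a q-space and ω-balanced. The
q-points pull back along the closed map `G → G ⧸ H` with countably compact fibres, and conjugation
conditions pull back along the homomorphism: since the map is closed and `H ⊆ O`, some neighbourhood
of `1` in `G ⧸ H` has its preimage inside `O`.
-/

section QSpace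

variable {X Y : Type*} [TopologicalSpace X] [TopologicalSpace Y]

theorem isCountablyCompactIn_iff {s : Set X} : IsCountablyCompactIn s ↔ IsCountablyCompact s :=
  isCountablyCompact_iff_countable_open_cover.symm

theorem IsCountablyCompact.of_forall_seq {s : Set X}
    (h : ∀ u : ℕ → X, (∀ n, u n ∈ s) → ∃ x ∈ s, MapClusterPt x atTop u) :
    IsCountablyCompact s := by
  refine IsCountablyCompact.of_seq_clusterPt fun u hu => ?_
  obtain ⟨N, hN⟩ := eventually_atTop.1 hu
  obtain ⟨x, hx, hux⟩ := h (fun n => u (n + N)) fun n => hN _ (Nat.le_add_left N n)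
  exact ⟨x, hx, hux.of_comp (tendsto_add_atTop_nat N)⟩

/-- If `u` had no cluster point, the complements of the closures of its tails would cover the
countably compact fibre over `y`, so one tail closure `C` misses the fibre; then the closed set
`f '' C` misses `y` although it contains a tail of `f ∘ u`. -/
theorem IsClosedMap.exists_mapClusterPt {f : X → Y} (hf : IsClosedMap f) {y : Y}
    (hy : IsCountablyCompact (f ⁻¹' {y})) {u : ℕ → X} (hu : MapClusterPt y atTop (f ∘ u)) :
    ∃ x, MapClusterPt x atTop u := by
  by_contra! hno
  have hcover : f ⁻¹' {y} ⊆ ⋃ m, (closure (u '' Ici m))ᶜ := fun x _ => by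
    simpa [mapClusterPt_atTop_iff_forall_mem_closure] using hno x
  have hmono : Monotone fun m => (closure (u '' Ici m))ᶜ := fun m k hmk =>
    compl_subset_compl.2 (closure_mono (image_mono (Ici_subset_Ici.2 hmk)))
  obtain ⟨M, hM⟩ := hy.elim_directed_cover _ (fun _ => isClosed_closure.isOpen_compl) hcover
    hmono.directed_le
  have hyC : y ∉ f '' closure (u '' Ici M) := by
    rintro ⟨x, hx, rfl⟩
    exact hM rfl hx
  obtain ⟨n, hn, hfn⟩ := frequently_atTop.1
    (mapClusterPt_iff_frequently.1 hu _ ((hf _ isClosed_closure).isOpen_compl.mem_nhds hyC)) M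
  exact hfn ⟨u n, subset_closure ⟨n, hn, rfl⟩, rfl⟩

theorem IsQSequenceAt.mono {x : X} {U V : ℕ → Set X} (hU : IsQSequenceAt x U)
    (hV : ∀ n, IsOpen (V n) ∧ x ∈ V n) (hVU : ∀ n, V n ⊆ U n) : IsQSequenceAt x V :=
  ⟨hV, fun u hu => hU.2 u fun n => hVU n (hu n)⟩

theorem QSpace.of_firstCountableTopology [FirstCountableTopology X] : QSpace X := by
  intro x
  obtain ⟨s, hs⟩ := (𝓝 x).exists_antitone_basis
  refine ⟨fun n => interior (s n),
    fun n => ⟨isOpen_interior, mem_interior_iff_mem_nhds.2 (hs.mem n)⟩,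
    fun u hu => ⟨x, (hs.tendsto fun n => interior_subset (hu n)).mapClusterPt⟩⟩

theorem QSpace.of_isClosedMap {f : X → Y} (hcont : Continuous f) (hf : IsClosedMap f)
    (hfib : ∀ y, IsCountablyCompact (f ⁻¹' {y})) (hY : QSpace Y) : QSpace X := by
  intro x
  obtain ⟨U, hUo, hU⟩ := hY (f x)
  refine ⟨fun n => f ⁻¹' U n, fun n => ⟨(hUo n).1.preimage hcont, (hUo n).2⟩, fun u hu => ?_⟩
  obtain ⟨y, hy⟩ := hU (f ∘ u) hu
  exact hf.exists_mapClusterPt (hfib y) hy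

end QSpace

section OmegaBalanced

variable {G K : Type*} [Group G] [TopologicalSpace G] [Group K] [TopologicalSpace K]

theorem OmegaBalanced.of_firstCountableTopology [ContinuousMul K] [FirstCountableTopology K] :
    OmegaBalanced K := by
  intro U hU
  obtain ⟨s, hs⟩ := (𝓝 (1 : K)).exists_antitone_basis
  refine ⟨range fun n => interior (s n), countable_range _, ?_, fun x => ?_⟩
  · rintro _ ⟨n, rfl⟩
    exact ⟨isOpen_interior, mem_interior_iff_mem_nhds.2 (hs.mem n)⟩
  · have hconj : (fun v => x * v * x⁻¹) ⁻¹' U ∈ 𝓝 (1 : K) :=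
      ContinuousAt.preimage_mem_nhds (by fun_prop) (by simpa using hU)
    obtain ⟨n, hn⟩ := hs.mem_iff.1 hconj
    exact ⟨_, mem_range_self n, fun v hv => hn (interior_subset hv)⟩

theorem OmegaBalanced.exists_countable_conj_subset_preimage (hK : OmegaBalanced K) (f : G →* K)
    (hf : Continuous f) {W : Set K} (hW : W ∈ 𝓝 1) :
    ∃ γ : Set (Set G), γ.Countable ∧ (∀ V ∈ γ, IsOpen V ∧ (1 : G) ∈ V) ∧
      ∀ x : G, ∃ V ∈ γ, ∀ v ∈ V, x * v * x⁻¹ ∈ f ⁻¹' W := by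
  obtain ⟨γ, hγ, hγo, hconj⟩ := hK W hW
  refine ⟨preimage f '' γ, hγ.image _, ?_, fun x => ?_⟩
  · rintro _ ⟨V, hV, rfl⟩
    exact ⟨(hγo V hV).1.preimage hf, by simpa using (hγo V hV).2⟩
  · obtain ⟨V, hV, hxV⟩ := hconj (f x)
    exact ⟨f ⁻¹' V, mem_image_of_mem _ hV, fun v hv => by simpa using hxV _ hv⟩

theorem OmegaBalanced.exists_seq (hG : OmegaBalanced G) {U : Set G} (hU : U ∈ 𝓝 1) :
    ∃ W : ℕ → Set G, (∀ i, W i ∈ 𝓝 1) ∧ ∀ x : G, ∃ i, ∀ v ∈ W i, x * v * x⁻¹ ∈ U := by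
  obtain ⟨γ, hγ, hγo, hconj⟩ := hG U hU
  obtain ⟨W, rfl⟩ := hγ.exists_eq_range ⟨_, (hconj 1).choose_spec.1⟩
  refine ⟨W, fun i => (hγo _ (mem_range_self i)).1.mem_nhds (hγo _ (mem_range_self i)).2,
    fun x => ?_⟩
  obtain ⟨_, ⟨i, rfl⟩, hi⟩ := hconj x
  exact ⟨i, hi⟩

theorem exists_countable_conj_subset_of_isClosedMap_mk [IsTopologicalGroup G] {H : Subgroup G}
    [H.Normal] [FirstCountableTopology (G ⧸ H)]
    (hmk : IsClosedMap (QuotientGroup.mk : G → G ⧸ H)) {O : Set G} (hO : IsOpen O)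
    (hHO : (H : Set G) ⊆ O) :
    ∃ γ : Set (Set G), γ.Countable ∧ (∀ V ∈ γ, IsOpen V ∧ (1 : G) ∈ V) ∧
      ∀ x : G, ∃ V ∈ γ, ∀ v ∈ V, x * v * x⁻¹ ∈ O := by
  have hW : (QuotientGroup.mk '' Oᶜ : Set (G ⧸ H))ᶜ ∈ 𝓝 1 := by
    refine (hmk _ hO.isClosed_compl).isOpen_compl.mem_nhds ?_
    rintro ⟨g, hg, hg1⟩
    exact hg (hHO ((QuotientGroup.eq_one_iff g).1 hg1))
  obtain ⟨γ, hγ, hγo, hconj⟩ := OmegaBalanced.of_firstCountableTopology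
    |>.exists_countable_conj_subset_preimage (QuotientGroup.mk' H) QuotientGroup.continuous_mk hW
  refine ⟨γ, hγ, hγo, fun x => (hconj x).imp fun V hV => ⟨hV.1, fun v hv => ?_⟩⟩
  by_contra hvO
  exact hV.2 v hv (mem_image_of_mem _ hvO)

end OmegaBalanced

section Metrizable

variable {G : Type*} [Group G] [TopologicalSpace G] [IsTopologicalGroup G]

theorem IsTopologicalGroup.metrizableSpace [T0Space G] [(𝓝 (1 : G)).IsCountablyGenerated] :
    MetrizableSpace G := by
  let := IsTopologicalGroup.rightUniformSpace G
  have : (uniformity G).IsCountablyGenerated := by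
    rw [uniformity_eq_comap_nhds_one']
    exact Filter.comap.isCountablyGenerated _ _
  exact UniformSpace.metrizableSpace

theorem Subgroup.metrizableSpace_quotient {H : Subgroup G} [H.Normal] (hH : IsClosed (H : Set G))
    (hc : HasCountableCharacter (H : Set G)) : MetrizableSpace (G ⧸ H) := by
  obtain ⟨U, hU, hUH⟩ := hc
  have hbasis : (𝓝 (1 : G ⧸ H)).HasCountableBasis (fun _ => True)
      fun n => (QuotientGroup.mk : G → G ⧸ H) '' U n := by
    refine ⟨⟨fun t => ⟨fun ht => ?_, fun ⟨n, _, hn⟩ => mem_of_superset ?_ hn⟩⟩, to_countable _⟩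
    · obtain ⟨t', ht't, ht'o, ht'1⟩ := mem_nhds_iff.1 ht
      obtain ⟨n, hn⟩ := hUH _ (ht'o.preimage QuotientGroup.continuous_mk) fun h hh => by
        simpa [(QuotientGroup.eq_one_iff h).2 hh] using ht'1
      exact ⟨n, trivial, (image_subset_iff.2 hn).trans ht't⟩
    · exact QuotientGroup.isOpenMap_coe.image_mem_nhds
        ((hU n).1.mem_nhds ((hU n).2 H.one_mem))
  have : IsClosed (H : Set G) := hH
  have := hbasis.isCountablyGenerated
  exact IsTopologicalGroup.metrizableSpace

end Metrizable

structure NhdsChain (G : Type*) [Group G] [TopologicalSpace G] where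
  toFun : ℕ → Set G
  isOpen : ∀ n, IsOpen (toFun n)
  one_mem : ∀ n, (1 : G) ∈ toFun n
  inv_eq : ∀ n, (toFun n)⁻¹ = toFun n
  mul_subset : ∀ n, toFun (n + 1) * toFun (n + 1) ⊆ toFun n

namespace NhdsChain

variable {G : Type*} [Group G] [TopologicalSpace G]

instance : CoeFun (NhdsChain G) fun _ => ℕ → Set G := ⟨toFun⟩

variable (S : NhdsChain G)

theorem succ_subset (n : ℕ) : S (n + 1) ⊆ S n :=
  (subset_mul_left _ (S.one_mem _)).trans (S.mul_subset n)

theorem antitone : Antitone S := antitone_nat_of_succ_le S.succ_subset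

theorem closure_succ_subset [IsTopologicalGroup G] (n : ℕ) : closure (S (n + 1)) ⊆ S n :=
  (closure_subset_mul_self_of_mem_nhds_one ((S.isOpen _).mem_nhds (S.one_mem _))).trans
    (S.mul_subset n)

def subgroup : Subgroup G where
  carrier := ⋂ n, S n
  one_mem' := mem_iInter.2 S.one_mem
  mul_mem' ha hb := mem_iInter.2 fun n =>
    S.mul_subset n (mul_mem_mul (mem_iInter.1 ha (n + 1)) (mem_iInter.1 hb (n + 1)))
  inv_mem' ha := mem_iInter.2 fun n => S.inv_eq n ▸ inv_mem_inv.2 (mem_iInter.1 ha n)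

theorem subgroup_subset (n : ℕ) : (S.subgroup : Set G) ⊆ S n := iInter_subset _ n

theorem isClosed_subgroup [IsTopologicalGroup G] : IsClosed (S.subgroup : Set G) :=
  isClosed_of_closure_subset fun _ hx => mem_iInter.2 fun n =>
    S.closure_succ_subset n (closure_mono (S.subgroup_subset (n + 1)) hx)

theorem subgroup_normal (hconj : ∀ k x, ∃ n, ∀ v ∈ S n, x * v * x⁻¹ ∈ S k) :
    S.subgroup.Normal where
  conj_mem a ha x := mem_iInter.2 fun k =>
    let ⟨n, hn⟩ := hconj k x
    hn a (S.subgroup_subset n ha)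

section IsQSequence

variable [IsTopologicalGroup G] {S} (hS : IsQSequenceAt (1 : G) S)
include hS

theorem exists_mapClusterPt_mem_subgroup {u : ℕ → G} (hu : ∀ n, u n ∈ S n) :
    ∃ p ∈ S.subgroup, MapClusterPt p atTop u := by
  obtain ⟨p, hp⟩ := hS.2 u hu
  refine ⟨p, mem_iInter.2 fun n => S.closure_succ_subset n ?_, hp⟩
  refine closure_mono ?_ (mapClusterPt_atTop_iff_forall_mem_closure.1 hp (n + 1))
  rintro _ ⟨k, hk, rfl⟩
  exact S.antitone hk (hu k)

theorem isCountablyCompact_subgroup : IsCountablyCompact (S.subgroup : Set G) :=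
  IsCountablyCompact.of_forall_seq fun _ hu =>
    S.exists_mapClusterPt_mem_subgroup hS fun n => S.subgroup_subset n (hu n)

theorem exists_subset_of_subgroup_subset {W : Set G} (hW : IsOpen W)
    (hHW : (S.subgroup : Set G) ⊆ W) : ∃ n, S n ⊆ W := by
  by_contra! h
  choose u hu hWu using fun n => not_subset.1 (h n)
  obtain ⟨p, hp, hup⟩ := S.exists_mapClusterPt_mem_subgroup hS hu
  exact hW.isClosed_compl.mem_of_mapClusterPt hup (Eventually.of_forall hWu) (hHW hp)

theorem hasCountableCharacter_subgroup : HasCountableCharacter (S.subgroup : Set G) :=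
  ⟨S, fun n => ⟨S.isOpen n, S.subgroup_subset n⟩,
    fun _ hW hHW => S.exists_subset_of_subgroup_subset hS hW hHW⟩

theorem isClosed_mul_subgroup {F : Set G} (hF : IsClosed F) :
    IsClosed (F * (S.subgroup : Set G)) := by
  refine isClosed_of_closure_subset fun z hz => ?_
  have hsel : ∀ n, ∃ f ∈ F, ∃ h ∈ S.subgroup, z⁻¹ * (f * h) ∈ S (n + 1) := fun n => by
    obtain ⟨_, hw, f, hf, h, hh, rfl⟩ := mem_closure_iff.1 hz _ ((S.isOpen (n + 1)).smul z)
      (mem_smul_set_iff_inv_smul_mem.2 (by simpa using S.one_mem (n + 1)))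
    exact ⟨f, hf, h, hh, by simpa [mem_smul_set_iff_inv_smul_mem] using hw⟩
  choose f hf h hh hfh using hsel
  have hfS : ∀ n, z⁻¹ * f n ∈ S n := fun n => by
    simpa [mul_assoc] using S.mul_subset n
      (mul_mem_mul (hfh n) (S.subgroup_subset (n + 1) (inv_mem (hh n))))
  obtain ⟨p, hp, hfp⟩ := S.exists_mapClusterPt_mem_subgroup hS hfS
  have hzp : MapClusterPt (z * p) atTop f := by
    simpa [MapClusterPt, Function.comp_def] using
      hfp.map (continuous_const_mul z).continuousAt tendsto_map
  have hzpF : z * p ∈ F := hF.mem_of_mapClusterPt hzp (Eventually.of_forall hf)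
  simpa using mul_mem_mul hzpF (inv_mem hp)

theorem isClosedMap_mk : IsClosedMap (QuotientGroup.mk : G → G ⧸ S.subgroup) := fun F hF => by
  rw [← (QuotientGroup.isQuotientMap_mk _).isClosed_preimage,
    QuotientGroup.preimage_image_mk_eq_mul]
  exact S.isClosed_mul_subgroup hS hF

theorem isCountablyCompact_preimage_mk (y : G ⧸ S.subgroup) :
    IsCountablyCompact ((QuotientGroup.mk : G → G ⧸ S.subgroup) ⁻¹' {y}) := by
  obtain ⟨x, rfl⟩ := QuotientGroup.mk_surjective y
  rw [← image_singleton, QuotientGroup.preimage_image_mk_eq_mul, singleton_mul]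
  exact (S.isCountablyCompact_subgroup hS).image (continuous_const_mul x)

end IsQSequence

end NhdsChain

section Construction

variable {G : Type*} [Group G] [TopologicalSpace G]

theorem exists_isOpen_one_mem_inv_eq_mul_subset [IsTopologicalGroup G] {U : Set G}
    (hU : U ∈ 𝓝 1) : ∃ V : Set G, IsOpen V ∧ (1 : G) ∈ V ∧ V⁻¹ = V ∧ V * V ⊆ U := by
  obtain ⟨V, hVo, hV1, hVU⟩ := exists_open_nhds_one_mul_subset hU
  refine ⟨V ∩ V⁻¹, hVo.inter hVo.inv, ⟨hV1, by simpa using hV1⟩, ?_, ?_⟩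
  · rw [inter_inv, inv_inv, inter_comm]
  · exact (mul_subset_mul inter_subset_left inter_subset_left).trans hVU

/-- When `sqrt T` is a neighbourhood of `1` whose square lies in `T`, the square of the
`(n + 1)`-st set lies in the `n`-th, in `Q n`, and in the `i`-th member of the family `c` attached
to the `k`-th set, where `n = Nat.pair k i` runs through all pairs. -/
noncomputable def balancedChainSeq (sqrt : Set G → Set G) (c : Set G → ℕ → Set G)
    (Q : ℕ → Set G) : ℕ → Set G
  | 0 => univ
  | n + 1 => sqrt (balancedChainSeq sqrt c Q n ∩ Q n ∩
      c (balancedChainSeq sqrt c Q n.unpair.1) n.unpair.2)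
decreasing_by
  · exact Nat.lt_succ_self n
  · exact Nat.lt_succ_of_le (Nat.unpair_left_le n)

theorem OmegaBalanced.exists_nhdsChain [IsTopologicalGroup G] (hG : OmegaBalanced G)
    {Q : ℕ → Set G} (hQ : ∀ n, Q n ∈ 𝓝 1) :
    ∃ S : NhdsChain G, (∀ n, S n ⊆ Q n) ∧ ∀ k x, ∃ n, ∀ v ∈ S n, x * v * x⁻¹ ∈ S k := by
  choose! sqrt hsqrt using fun U (hU : U ∈ 𝓝 (1 : G)) => exists_isOpen_one_mem_inv_eq_mul_subset hU
  choose! c hc using fun U (hU : U ∈ 𝓝 (1 : G)) => hG.exists_seq hU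
  set V := balancedChainSeq sqrt c Q
  have hsucc (n : ℕ) : V n ∈ 𝓝 1 → V n.unpair.1 ∈ 𝓝 1 →
      IsOpen (V (n + 1)) ∧ (1 : G) ∈ V (n + 1) ∧ (V (n + 1))⁻¹ = V (n + 1) ∧
        V (n + 1) * V (n + 1) ⊆ V n ∩ Q n ∩ c (V n.unpair.1) n.unpair.2 := fun hn hk => by
    rw [show V (n + 1) = _ from balancedChainSeq.eq_2 ..]
    exact hsqrt _ (inter_mem (inter_mem hn (hQ n)) ((hc _ hk).1 _))
  have hnhds (n : ℕ) : V n ∈ 𝓝 1 := by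
    induction n using Nat.strong_induction_on with
    | _ n ih =>
      obtain _ | n := n
      · exact (show V 0 = univ from balancedChainSeq.eq_1 ..) ▸ univ_mem
      · have h := hsucc n (ih n n.lt_succ_self) (ih _ (Nat.lt_succ_of_le (Nat.unpair_left_le n)))
        exact h.1.mem_nhds h.2.1
  have hV (n : ℕ) := hsucc n (hnhds n) (hnhds _)
  have hself (n : ℕ) : V (n + 1) ⊆ V n ∩ Q n ∩ c (V n.unpair.1) n.unpair.2 :=
    (subset_mul_left _ (hV n).2.1).trans (hV n).2.2.2
  refine ⟨⟨fun n => V (n + 1), fun n => (hV n).1, fun n => (hV n).2.1, fun n => (hV n).2.2.1,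
    fun n => (hV (n + 1)).2.2.2.trans (inter_subset_left.trans inter_subset_left)⟩,
    fun n => (hself n).trans (inter_subset_left.trans inter_subset_right), fun k x => ?_⟩
  obtain ⟨i, hi⟩ := (hc _ (hnhds (k + 1))).2 x
  refine ⟨Nat.pair (k + 1) i, fun v hv => hi v ?_⟩
  simpa using (hself _).trans inter_subset_right hv

end Construction

theorem omegaBalanced_and_qSpace_iff_general (G : Type*) [Group G] [TopologicalSpace G] [IsTopologicalGroup G] :
    (OmegaBalanced G ∧ QSpace G) ↔
      ∀ O : Set G, IsOpen O → (1 : G) ∈ O →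
        ∃ H : Subgroup G, H.Normal ∧ IsCountablyCompactIn (H : Set G) ∧
          HasCountableCharacter (H : Set G) ∧ (H : Set G) ⊆ O ∧
          IsClosedMap (QuotientGroup.mk : G → G ⧸ H) ∧
          (∀ y : G ⧸ H, IsCountablyCompactIn ((QuotientGroup.mk : G → G ⧸ H) ⁻¹' {y})) ∧
          MetrizableSpace (G ⧸ H) := by
  constructor
  · rintro ⟨hG, hq⟩ O hO hO1
    obtain ⟨Q, hQ⟩ := hq 1
    obtain ⟨S, hSQ, hconj⟩ := hG.exists_nhdsChain (Q := fun n => O ∩ Q n)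
      fun n => inter_mem (hO.mem_nhds hO1) ((hQ.1 n).1.mem_nhds (hQ.1 n).2)
    have hS : IsQSequenceAt (1 : G) S :=
      hQ.mono (fun n => ⟨S.isOpen n, S.one_mem n⟩) fun n => (hSQ n).trans inter_subset_right
    have := S.subgroup_normal hconj
    exact ⟨S.subgroup, this, isCountablyCompactIn_iff.2 (S.isCountablyCompact_subgroup hS),
      S.hasCountableCharacter_subgroup hS, (S.subgroup_subset 0).trans ((hSQ 0).trans
      inter_subset_left), S.isClosedMap_mk hS,
      fun y => isCountablyCompactIn_iff.2 (S.isCountablyCompact_preimage_mk hS y),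
      Subgroup.metrizableSpace_quotient S.isClosed_subgroup (S.hasCountableCharacter_subgroup hS)⟩
  · intro h
    refine ⟨fun U hU => ?_, ?_⟩
    · obtain ⟨O, hOU, hO, hO1⟩ := mem_nhds_iff.1 hU
      obtain ⟨H, _, -, -, hHO, hmk, -, _⟩ := h O hO hO1
      obtain ⟨γ, hγ, hγo, hconj⟩ := exists_countable_conj_subset_of_isClosedMap_mk hmk hO hHO
      exact ⟨γ, hγ, hγo, fun x => (hconj x).imp fun V hV => ⟨hV.1, fun v hv => hOU (hV.2 v hv)⟩⟩
    · obtain ⟨H, _, -, -, -, hmk, hfib, _⟩ := h univ isOpen_univ (mem_univ 1)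
      exact QSpace.of_isClosedMap QuotientGroup.continuous_mk hmk
        (fun y => isCountablyCompactIn_iff.1 (hfib y)) QSpace.of_firstCountableTopology

theorem omegaBalanced_and_qSpace_iff (G : Type*) [Group G] [TopologicalSpace G] [IsTopologicalGroup G] [T2Space G] :
    (OmegaBalanced G ∧ QSpace G) ↔
      ∀ O : Set G, IsOpen O → (1 : G) ∈ O →
        ∃ H : Subgroup G, H.Normal ∧ IsCountablyCompactIn (H : Set G) ∧
          HasCountableCharacter (H : Set G) ∧ (H : Set G) ⊆ O ∧
          IsClosedMap (QuotientGroup.mk : G → G ⧸ H) ∧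
          (∀ y : G ⧸ H, IsCountablyCompactIn ((QuotientGroup.mk : G → G ⧸ H) ⁻¹' {y})) ∧
          MetrizableSpace (G ⧸ H) :=
  omegaBalanced_and_qSpace_iff_general G
end

section
/- A Hausdorff topological group G is ω-narrow and a strict q-space if and only if for each open neighborhood O of the identity in G there is a closed sequentially compact invariant (normal) subgroup H which is of countable character in G, such that H ⊆ O, the canonical quotient mapping p : G → G/H is sequential-perfect, and the quotient space G/H is separable and metrizable. -/
/-!
Forward direction: an ω-narrow group is ω-balanced, so the neighbourhoods `U n ∩ O` (with `U`
a q-sequence at `1`) can be enlarged to a countable family `N` of open neighbourhoods of `1`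
closed under choosing `W` with `W * W⁻¹ ⊆ V` and under choosing neighbourhoods that control
conjugation. Then `H = ⋂₀ N` is a closed normal subgroup inside `O ∩ ⋂ n, U n`, hence
sequentially compact, and the q-property makes the finite intersections of members of `N` a
countable base at `H`. This base yields that `G ⧸ H` is first countable and that the quotient map
is closed; `G ⧸ H` inherits ω-narrowness, so it is separable, second countable, and metrizable.

Backward direction: a separable `G ⧸ H` with `H ⊆ W`, `W * W⁻¹ ⊆ V` gives a countable `A`
with `A * V = G`; and the preimages of a decreasing base at `p x` under the sequential-perfect
quotient map `p` form a q-sequence at `x` whose intersection is the fibre of `p x`.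
-/

open Filter Topology Set Pointwise TopologicalSpace

universe u

theorem Set.Countable.exists_countable_closure {α : Type*} {p : α → Prop} {S : Set α}
    (hS : S.Countable) (hSp : ∀ a ∈ S, p a) (f : α → Set α)
    (hf : ∀ a, p a → (f a).Countable ∧ ∀ b ∈ f a, p b) :
    ∃ T, S ⊆ T ∧ T.Countable ∧ (∀ a ∈ T, p a) ∧ ∀ a ∈ T, f a ⊆ T := by
  let F : ℕ → Set α := fun n => Nat.rec S (fun _ s => s ∪ ⋃ a ∈ s, f a) n
  have hF : ∀ n, (F n).Countable ∧ ∀ a ∈ F n, p a := by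
    intro n
    induction n with
    | zero => exact ⟨hS, hSp⟩
    | succ n ih =>
      refine ⟨ih.1.union (ih.1.biUnion fun a ha => (hf a (ih.2 a ha)).1), ?_⟩
      rintro b (hb | hb)
      · exact ih.2 b hb
      · obtain ⟨a, ha, hb⟩ := mem_iUnion₂.1 hb
        exact (hf a (ih.2 a ha)).2 b hb
  refine ⟨⋃ n, F n, subset_iUnion F 0, countable_iUnion fun n => (hF n).1, ?_, ?_⟩
  · intro a ha
    obtain ⟨n, ha⟩ := mem_iUnion.1 ha
    exact (hF n).2 a ha
  · intro a ha b hb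
    obtain ⟨n, ha⟩ := mem_iUnion.1 ha
    exact mem_iUnion.2 ⟨n + 1, Or.inr (mem_iUnion₂.2 ⟨a, ha, hb⟩)⟩

theorem IsSeqCompact.of_isClosed_subset {X : Type*} [TopologicalSpace X] {s t : Set X}
    (hs : IsSeqCompact s) (ht : IsClosed t) (hts : t ⊆ s) : IsSeqCompact t := fun u hu => by
  obtain ⟨x, -, φ, hφ, hx⟩ := hs fun n => hts (hu n)
  exact ⟨x, ht.mem_of_tendsto hx (Eventually.of_forall fun n => hu (φ n)), φ, hφ, hx⟩

theorem IsClosedMap.exists_mapClusterPt_of_tendsto {X Y : Type*} [TopologicalSpace X]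
    [TopologicalSpace Y] {f : X → Y} (hf : IsClosedMap f) {y : Y}
    (hy : IsSeqCompact (f ⁻¹' {y})) {u : ℕ → X} (hu : Tendsto (f ∘ u) atTop (𝓝 y)) :
    ∃ x, MapClusterPt x atTop u := by
  have hz : ∀ N, ∃ z ∈ closure (u '' Ici N), f z = y := fun N =>
    hf.closure_image_subset _ <| mem_closure_of_tendsto hu <|
      eventually_atTop.2 ⟨N, fun n hn => ⟨u n, mem_image_of_mem u hn, rfl⟩⟩
  choose z hzu hzy using hz
  obtain ⟨x, -, ψ, hψ, hx⟩ := hy (x := z) hzy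
  refine ⟨x, clusterPt_iff_forall_mem_closure.2 fun t ht => ?_⟩
  obtain ⟨N, hN⟩ := mem_atTop_sets.1 (mem_map.1 ht)
  refine closure_mono (image_subset_iff.2 fun n hn => hN n hn) <|
    isClosed_closure.mem_of_tendsto hx <| eventually_atTop.2 ⟨N, fun k hk => ?_⟩
  exact closure_mono (image_mono (Ici_subset_Ici.2 (hk.trans hψ.le_apply))) (hzu (ψ k))

theorem IsClosedMap.strictQSpace {X Y : Type*} [TopologicalSpace X] [TopologicalSpace Y]
    [FirstCountableTopology Y] [T1Space Y] {f : X → Y} (hf : IsClosedMap f) (hc : Continuous f)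
    (hfib : ∀ y, IsSeqCompact (f ⁻¹' {y})) : StrictQSpace X := by
  intro x
  obtain ⟨t, ht, hta⟩ := (nhds_basis_opens (f x)).exists_antitone_subbasis
  have hker : ⋂ n, f ⁻¹' t n = f ⁻¹' {f x} := by
    rw [← preimage_iInter, ← ker_nhds, hta.ker]
    simp
  exact ⟨fun n => f ⁻¹' t n, ⟨fun n => ⟨(ht n).2.preimage hc, (ht n).1⟩, fun u hu =>
    hf.exists_mapClusterPt_of_tendsto (hfib (f x)) (hta.tendsto hu)⟩, hker ▸ hfib (f x)⟩

theorem OmegaNarrow.of_surjective {G Q : Type*} [Group G] [TopologicalSpace G] [Group Q]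
    [TopologicalSpace Q] (hG : OmegaNarrow G) (f : G →* Q) (hf : Continuous f)
    (hsurj : Function.Surjective f) : OmegaNarrow Q := by
  intro V hV h1
  obtain ⟨A, hA, hAV⟩ := hG (f ⁻¹' V) (hV.preimage hf) (by simpa using h1)
  refine ⟨f '' A, hA.image f, eq_univ_of_forall fun y => ?_⟩
  obtain ⟨x, rfl⟩ := hsurj y
  obtain ⟨a, ha, v, hv, rfl⟩ : x ∈ A * f ⁻¹' V := hAV ▸ mem_univ x
  exact ⟨f a, mem_image_of_mem f ha, f v, hv, (map_mul f a v).symm⟩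

structure IsInvariantNhdsFamily {G : Type*} [Group G] [TopologicalSpace G] (N : Set (Set G)) :
    Prop where
  isOpen : ∀ V ∈ N, IsOpen V
  one_mem : ∀ V ∈ N, (1 : G) ∈ V
  exists_mul_inv_subset : ∀ V ∈ N, ∃ W ∈ N, W * W⁻¹ ⊆ V
  exists_conj_subset : ∀ V ∈ N, ∀ x : G, ∃ W ∈ N, ∀ w ∈ W, x * w * x⁻¹ ∈ V

namespace IsInvariantNhdsFamily

variable {G : Type*} [Group G] [TopologicalSpace G] {N : Set (Set G)}

theorem mem_sInter_of_clusterPt [IsTopologicalGroup G] (hN : IsInvariantNhdsFamily N)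
    {l : Filter G} (hl : ∀ V ∈ N, V ∈ l) {q : G} (hq : ClusterPt q l) : q ∈ ⋂₀ N := by
  refine mem_sInter.2 fun V hV => ?_
  obtain ⟨W, hW, hWV⟩ := hN.exists_mul_inv_subset V hV
  have hqW : (q⁻¹ * ·) ⁻¹' W ∈ 𝓝 q :=
    ((hN.isOpen W hW).preimage (continuous_const_mul q⁻¹)).mem_nhds
      (by simpa using hN.one_mem W hW)
  obtain ⟨x, hxq, hx⟩ := clusterPt_iff_nonempty.1 hq hqW (hl W hW)
  simpa using hWV (mul_mem_mul hx (inv_mem_inv.2 hxq))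

def subgroup (hN : IsInvariantNhdsFamily N) : Subgroup G :=
  Subgroup.ofDiv (⋂₀ N) ⟨1, mem_sInter.2 hN.one_mem⟩ fun x hx y hy => mem_sInter.2 fun V hV => by
    obtain ⟨W, hW, hWV⟩ := hN.exists_mul_inv_subset V hV
    exact hWV (mul_mem_mul (hx W hW) (inv_mem_inv.2 (hy W hW)))

theorem subgroup_normal (hN : IsInvariantNhdsFamily N) : hN.subgroup.Normal :=
  ⟨fun h hh x => mem_sInter.2 fun V hV => by
    obtain ⟨W, hW, hWV⟩ := hN.exists_conj_subset V hV x
    exact hWV h (mem_sInter.1 hh W hW)⟩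

theorem isClosed_subgroup [IsTopologicalGroup G] (hN : IsInvariantNhdsFamily N) :
    IsClosed (hN.subgroup : Set G) :=
  isClosed_of_closure_subset fun _ hz =>
    hN.mem_sInter_of_clusterPt (fun _ hV => mem_principal.2 (sInter_subset_of_mem hV))
      (mem_closure_iff_clusterPt.1 hz)

theorem mem_nhds_one_mul_principal (hN : IsInvariantNhdsFamily N) {V : Set G} (hV : V ∈ N) :
    V ∈ 𝓝 (1 : G) * 𝓟 (hN.subgroup : Set G) := by
  obtain ⟨W, hW, hWV⟩ := hN.exists_mul_inv_subset V hV
  refine Filter.mem_mul.2 ⟨W, (hN.isOpen W hW).mem_nhds (hN.one_mem W hW), _,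
    mem_principal_self _, (mul_subset_mul_left fun h hh => ?_).trans hWV⟩
  exact mem_inv.2 (mem_sInter.1 (hN.subgroup.inv_mem hh) W hW)

theorem exists_cofinal_seq [IsTopologicalGroup G] (hN : IsInvariantNhdsFamily N)
    (hNc : N.Countable) (hNne : N.Nonempty) {U : ℕ → Set G}
    (hU : ∀ u : ℕ → G, (∀ n, u n ∈ U n) → ∃ p, MapClusterPt p atTop u)
    (hNU : ∀ n, ∃ V ∈ N, V ⊆ U n) :
    ∃ M : ℕ → Set G, (∀ n, IsOpen (M n) ∧ (hN.subgroup : Set G) ⊆ M n ∧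
      M n ∈ 𝓝 (1 : G) * 𝓟 (hN.subgroup : Set G)) ∧
      ∀ W, IsOpen W → (hN.subgroup : Set G) ⊆ W → ∃ n, M n ⊆ W := by
  obtain ⟨e, rfl⟩ := hNc.exists_eq_range hNne
  choose c hcN hcU using hNU
  refine ⟨fun n => ⋂ k ∈ Iic n, e k ∩ c k, fun n => ⟨?_, ?_, ?_⟩, fun W hW hHW => ?_⟩
  · exact (finite_Iic n).isOpen_biInter fun k _ =>
      (hN.isOpen _ (mem_range_self k)).inter (hN.isOpen _ (hcN k))
  · exact subset_iInter₂ fun k _ =>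
      subset_inter (sInter_subset_of_mem (mem_range_self k)) (sInter_subset_of_mem (hcN k))
  · exact (biInter_mem (finite_Iic n)).2 fun k _ =>
      inter_mem (hN.mem_nhds_one_mul_principal (mem_range_self k))
        (hN.mem_nhds_one_mul_principal (hcN k))
  · -- `x n ∈ U n` clusters at some `q`, and `q ∈ ⋂₀ N ⊆ W` as `x` is eventually in each `e k`.
    by_contra! h
    choose x hxM hxW using fun n => not_subset.1 (h n)
    have hxek : ∀ k n, k ≤ n → x n ∈ e k ∩ c k := fun k n hkn => mem_iInter₂.1 (hxM n) k hkn
    obtain ⟨q, hq⟩ := hU x fun n => hcU n (hxek n n le_rfl).2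
    have hqH : q ∈ ⋂₀ range e := hN.mem_sInter_of_clusterPt (l := map x atTop)
      (forall_mem_range.2 fun k => mem_map.2 (mem_atTop_sets.2 ⟨k, fun n hn => (hxek k n hn).1⟩))
      hq
    obtain ⟨n, hn⟩ := (hq.frequently (hW.mem_nhds (hHW hqH))).exists
    exact hxW n hn

end IsInvariantNhdsFamily

section IsTopologicalGroup

variable {G : Type*} [Group G] [TopologicalSpace G] [IsTopologicalGroup G]

theorem exists_isOpen_one_mem_mul_inv_subset {V : Set G} (hV : V ∈ 𝓝 (1 : G)) :
    ∃ W : Set G, IsOpen W ∧ (1 : G) ∈ W ∧ W * W⁻¹ ⊆ V := by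
  obtain ⟨W, hWo, hW1, hWV⟩ := exists_open_nhds_one_mul_subset hV
  refine ⟨W ∩ W⁻¹, hWo.inter hWo.inv, ⟨hW1, by simpa using hW1⟩, ?_⟩
  refine (mul_subset_mul inter_subset_left ?_).trans hWV
  rw [inter_inv, inv_inv]
  exact inter_subset_right

theorem OmegaNarrow.omegaBalanced (hG : OmegaNarrow G) : OmegaBalanced G := by
  intro U hU
  obtain ⟨V, hV, hVU⟩ := exists_nhds_one_split4 hU
  set W := interior (V ∩ V⁻¹)
  have hW1 : (1 : G) ∈ W := mem_interior_iff_mem_nhds.2 (inter_mem hV (inv_mem_nhds_one G hV))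
  have hWU : ∀ a ∈ W, ∀ b ∈ W, ∀ c ∈ W, a⁻¹ * b * c ∈ U := fun a ha b hb c hc => by
    simpa using hVU (interior_subset ha).2 (interior_subset hb).1 (interior_subset hc).1
      (mem_of_mem_nhds hV)
  obtain ⟨A, hA, hAW⟩ := hG W isOpen_interior hW1
  refine ⟨(fun a => (fun v => a⁻¹ * v * a) ⁻¹' W) '' A, hA.image _, ?_, fun x => ?_⟩
  · rintro _ ⟨a, -, rfl⟩
    exact ⟨isOpen_interior.preimage (by fun_prop), by simpa using hW1⟩
  · obtain ⟨a, ha, w, hw, haw⟩ := Set.mem_mul.1 (hAW ▸ mem_univ x⁻¹ : x⁻¹ ∈ A * W)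
    refine ⟨_, mem_image_of_mem _ ha, fun v hv => ?_⟩
    have hx : x = w⁻¹ * a⁻¹ := by rw [← mul_inv_rev, haw, inv_inv]
    simpa [hx, mul_assoc] using hWU w hw _ hv w hw

theorem OmegaNarrow.exists_isInvariantNhdsFamily (hG : OmegaNarrow G) {S : Set (Set G)}
    (hS : S.Countable) (hSo : ∀ V ∈ S, IsOpen V ∧ (1 : G) ∈ V) :
    ∃ N, S ⊆ N ∧ N.Countable ∧ IsInvariantNhdsFamily N := by
  have step : ∀ V : Set G, IsOpen V ∧ (1 : G) ∈ V → ∃ t : Set (Set G),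
      (t.Countable ∧ ∀ W ∈ t, IsOpen W ∧ (1 : G) ∈ W) ∧
      (∃ W ∈ t, W * W⁻¹ ⊆ V) ∧ ∀ x : G, ∃ W ∈ t, ∀ w ∈ W, x * w * x⁻¹ ∈ V := by
    rintro V ⟨hVo, hV1⟩
    obtain ⟨W, hWo, hW1, hWV⟩ := exists_isOpen_one_mem_mul_inv_subset (hVo.mem_nhds hV1)
    obtain ⟨γ, hγc, hγ, hγV⟩ := hG.omegaBalanced V (hVo.mem_nhds hV1)
    refine ⟨insert W γ, ⟨hγc.insert W, ?_⟩, ⟨W, mem_insert W γ, hWV⟩, fun x => ?_⟩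
    · rintro U (rfl | hU)
      exacts [⟨hWo, hW1⟩, hγ U hU]
    · obtain ⟨U, hU, hUV⟩ := hγV x
      exact ⟨U, mem_insert_of_mem W hU, hUV⟩
  choose! f hf using step
  obtain ⟨N, hSN, hNc, hNo, hNf⟩ := hS.exists_countable_closure hSo f fun V hV => (hf V hV).1
  refine ⟨N, hSN, hNc, fun V hV => (hNo V hV).1, fun V hV => (hNo V hV).2, fun V hV => ?_,
    fun V hV x => ?_⟩
  · obtain ⟨W, hW, hWV⟩ := (hf V (hNo V hV)).2.1
    exact ⟨W, hNf V hV hW, hWV⟩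
  · obtain ⟨W, hW, hWV⟩ := (hf V (hNo V hV)).2.2 x
    exact ⟨W, hNf V hV hW, hWV⟩

theorem OmegaNarrow.exists_normal_subgroup_of_isQSequenceAt (hG : OmegaNarrow G)
    {U : ℕ → Set G} (hU : IsQSequenceAt 1 U) (hK : IsSeqCompact (⋂ n, U n)) {O : Set G}
    (hO : IsOpen O) (h1O : (1 : G) ∈ O) :
    ∃ H : Subgroup G, H.Normal ∧ IsClosed (H : Set G) ∧ IsSeqCompact (H : Set G) ∧
      HasCountableCharacter (H : Set G) ∧ (H : Set G) ⊆ O ∧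
      𝓝 1 * 𝓟 (H : Set G) ≤ 𝓝ˢ (H : Set G) := by
  obtain ⟨N, hSN, hNc, hN⟩ :=
    hG.exists_isInvariantNhdsFamily (countable_range fun n => U n ∩ O)
      (forall_mem_range.2 fun n => ⟨(hU.1 n).1.inter hO, (hU.1 n).2, h1O⟩)
  have hUO : ∀ n, U n ∩ O ∈ N := fun n => hSN (mem_range_self n)
  have hHU : ∀ n, (hN.subgroup : Set G) ⊆ U n ∩ O := fun n => sInter_subset_of_mem (hUO n)
  obtain ⟨M, hM, hMW⟩ :=
    hN.exists_cofinal_seq hNc ⟨_, hUO 0⟩ hU.2 fun n => ⟨_, hUO n, inter_subset_left⟩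
  refine ⟨hN.subgroup, hN.subgroup_normal, hN.isClosed_subgroup,
    hK.of_isClosed_subset hN.isClosed_subgroup (subset_iInter fun n => (hHU n).trans
      inter_subset_left),
    ⟨M, fun n => ⟨(hM n).1, (hM n).2.1⟩, hMW⟩, (hHU 0).trans inter_subset_right, fun A hA => ?_⟩
  obtain ⟨W, hW, hHW, hWA⟩ := mem_nhdsSet_iff_exists.1 hA
  obtain ⟨n, hn⟩ := hMW W hW hHW
  exact mem_of_superset (hM n).2.2 (hn.trans hWA)

theorem OmegaNarrow.separableSpace [FirstCountableTopology G] (hG : OmegaNarrow G) :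
    SeparableSpace G := by
  obtain ⟨V, hV, hVb⟩ := (nhds_basis_opens (1 : G)).exists_antitone_subbasis
  choose A hA hAV using fun n => hG (V n) (hV n).2 (hV n).1
  refine ⟨⋃ n, A n, countable_iUnion hA, dense_iff_inter_open.2 fun W hW ⟨g, hg⟩ => ?_⟩
  have hgW : (fun v => g * v⁻¹) ⁻¹' W ∈ 𝓝 (1 : G) :=
    (hW.preimage (by fun_prop)).mem_nhds (by simpa using hg)
  obtain ⟨n, hn⟩ := hVb.mem_iff.1 hgW
  obtain ⟨a, ha, v, hv, hav⟩ : g ∈ A n * V n := hAV n ▸ mem_univ g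
  refine ⟨a, ?_, mem_iUnion.2 ⟨n, ha⟩⟩
  simpa [← hav] using hn hv

theorem IsTopologicalGroup.secondCountableTopology_of_separable [FirstCountableTopology G]
    [SeparableSpace G] : SecondCountableTopology G := by
  let := IsTopologicalGroup.rightUniformSpace G
  have : (uniformity G).IsCountablyGenerated := by
    rw [uniformity_eq_comap_nhds_one']
    infer_instance
  exact UniformSpace.secondCountable_of_separable G

theorem omegaNarrow_of_forall_separableSpace_quotient
    (h : ∀ O : Set G, IsOpen O → (1 : G) ∈ O →
      ∃ H : Subgroup G, (H : Set G) ⊆ O ∧ SeparableSpace (G ⧸ H)) :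
    OmegaNarrow G := by
  intro V hV h1
  obtain ⟨W, hW, hW1, hWV⟩ := exists_isOpen_one_mem_mul_inv_subset (hV.mem_nhds h1)
  obtain ⟨H, hHW, hsep⟩ := h W hW hW1
  obtain ⟨D, hD, hDd⟩ := exists_countable_dense (G ⧸ H)
  refine ⟨Quotient.out '' D, hD.image _, eq_univ_of_forall fun g => ?_⟩
  obtain ⟨_, ⟨_, ⟨v, hv, rfl⟩, rfl⟩, hd⟩ := hDd.inter_open_nonempty _
    (QuotientGroup.isOpenMap_coe _ (hW.smul g)) ⟨_, mem_image_of_mem _ (smul_mem_smul_set hW1)⟩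
  set a := Quotient.out (QuotientGroup.mk (g • v) : G ⧸ H)
  have ha : a⁻¹ * (g * v) ∈ H := QuotientGroup.eq.1 (QuotientGroup.out_eq' _)
  refine ⟨a, mem_image_of_mem _ hd, _, hWV (mul_mem_mul (hHW ha) (inv_mem_inv.2 hv)), ?_⟩
  group

namespace QuotientGroup

variable {H : Subgroup G}

/-- The hypothesis says that every neighbourhood of `H` contains `V * H` for some neighbourhood
`V` of `1`, as happens for compact `H`. -/
theorem isClosedMap_mk_of_le_nhdsSet (hH : 𝓝 1 * 𝓟 (H : Set G) ≤ 𝓝ˢ (H : Set G)) :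
    IsClosedMap ((↑) : G → G ⧸ H) := by
  intro t ht
  rw [← (isQuotientMap_mk H).isClosed_preimage, preimage_image_mk_eq_mul, ← isOpen_compl_iff,
    isOpen_iff_mem_nhds]
  intro g hg
  have hW : (g * ·) ⁻¹' tᶜ ∈ 𝓝ˢ (H : Set G) :=
    (ht.isOpen_compl.preimage (continuous_const_mul g)).mem_nhdsSet.2 fun h hh hgh =>
      hg ⟨g * h, hgh, h⁻¹, inv_mem hh, by simp⟩
  obtain ⟨V, hV, K, hK, hVK⟩ := Filter.mem_mul.1 (hH hW)
  refine mem_of_superset (smul_mem_nhds_self.2 hV) ?_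
  rintro _ ⟨v, hv, rfl⟩ ⟨c, hc, h, hh, hch⟩
  simp only [smul_eq_mul] at hch
  have hc' : g * (v * h⁻¹) = c := by rw [← mul_assoc, ← hch, mul_inv_cancel_right]
  exact hVK (mul_mem_mul hv (mem_principal.1 hK (inv_mem hh))) (by simpa only [hc'] using hc)

theorem isSeqCompact_preimage_mk (hH : IsSeqCompact (H : Set G)) (y : G ⧸ H) :
    IsSeqCompact (((↑) : G → G ⧸ H) ⁻¹' {y}) := by
  obtain ⟨g, rfl⟩ := mk_surjective y
  rw [← image_singleton, preimage_image_mk_eq_mul, singleton_mul]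
  exact hH.image (continuous_const_mul g).seqContinuous

theorem firstCountableTopology_of_hasCountableCharacter
    (hH : HasCountableCharacter (H : Set G)) : FirstCountableTopology (G ⧸ H) := by
  obtain ⟨M, hM, hMW⟩ := hH
  refine ⟨mk_surjective.forall.2 fun g => HasBasis.isCountablyGenerated
    (p := fun _ : ℕ => True) (s := fun n => ((↑) : G → G ⧸ H) '' (g • M n)) ⟨fun t => ?_⟩⟩
  refine ⟨fun ht => ?_, fun ⟨n, _, hn⟩ => mem_of_superset ?_ hn⟩
  · obtain ⟨s, hst, hs, hgs⟩ := mem_nhds_iff.1 ht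
    obtain ⟨n, hn⟩ := hMW ((g * ·) ⁻¹' (((↑) : G → G ⧸ H) ⁻¹' s))
      ((hs.preimage continuous_mk).preimage (continuous_const_mul g)) fun h hh => by
        simpa [mk_mul_of_mem g hh] using hgs
    exact ⟨n, trivial, by rintro _ ⟨_, ⟨m, hm, rfl⟩, rfl⟩; exact hst (hn hm)⟩
  · exact (isOpenMap_coe _ ((hM n).1.smul g)).mem_nhds
      ⟨g • 1, smul_mem_smul_set ((hM n).2 H.one_mem), by simp⟩

end QuotientGroup

theorem OmegaNarrow.secondCountableTopology_quotient (hG : OmegaNarrow G) {H : Subgroup G}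
    [H.Normal] (hH : HasCountableCharacter (H : Set G)) : SecondCountableTopology (G ⧸ H) := by
  have := QuotientGroup.firstCountableTopology_of_hasCountableCharacter hH
  have := (hG.of_surjective (QuotientGroup.mk' H) QuotientGroup.continuous_mk
    (QuotientGroup.mk'_surjective H)).separableSpace
  exact IsTopologicalGroup.secondCountableTopology_of_separable

end IsTopologicalGroup

theorem omegaNarrow_and_strictQSpace_iff_general (G : Type*) [Group G] [TopologicalSpace G] [IsTopologicalGroup G] :
    (OmegaNarrow G ∧ StrictQSpace G) ↔
      ∀ O : Set G, IsOpen O → (1 : G) ∈ O →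
        ∃ H : Subgroup G, H.Normal ∧ IsClosed (H : Set G) ∧ IsSeqCompact (H : Set G) ∧
          HasCountableCharacter (H : Set G) ∧ (H : Set G) ⊆ O ∧
          IsClosedMap (QuotientGroup.mk : G → G ⧸ H) ∧
          (∀ y : G ⧸ H, IsSeqCompact ((QuotientGroup.mk : G → G ⧸ H) ⁻¹' {y})) ∧
          SeparableSpace (G ⧸ H) ∧ MetrizableSpace (G ⧸ H) := by
  constructor
  · rintro ⟨hG, hq⟩ O hO h1O
    obtain ⟨U, hU, hK⟩ := hq 1
    obtain ⟨H, hHn, hHc, hHs, hHcc, hHO, hHnhds⟩ :=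
      hG.exists_normal_subgroup_of_isQSequenceAt hU hK hO h1O
    have : IsClosed (H : Set G) := hHc
    have := hG.secondCountableTopology_quotient hHcc
    exact ⟨H, hHn, hHc, hHs, hHcc, hHO, QuotientGroup.isClosedMap_mk_of_le_nhdsSet hHnhds,
      QuotientGroup.isSeqCompact_preimage_mk hHs, inferInstance, inferInstance⟩
  · intro h
    refine ⟨omegaNarrow_of_forall_separableSpace_quotient fun O hO h1O => ?_, ?_⟩
    · obtain ⟨H, -, -, -, -, hHO, -, -, hsep, -⟩ := h O hO h1O
      exact ⟨H, hHO, hsep⟩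
    · obtain ⟨H, -, -, -, -, -, hcl, hfib, -, hmet⟩ := h univ isOpen_univ (mem_univ 1)
      exact hcl.strictQSpace QuotientGroup.continuous_mk hfib

theorem omegaNarrow_and_strictQSpace_iff (G : Type*) [Group G] [TopologicalSpace G] [IsTopologicalGroup G] [T2Space G] :
    (OmegaNarrow G ∧ StrictQSpace G) ↔
      ∀ O : Set G, IsOpen O → (1 : G) ∈ O →
        ∃ H : Subgroup G, H.Normal ∧ IsClosed (H : Set G) ∧ IsSeqCompact (H : Set G) ∧
          HasCountableCharacter (H : Set G) ∧ (H : Set G) ⊆ O ∧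
          IsClosedMap (QuotientGroup.mk : G → G ⧸ H) ∧
          (∀ y : G ⧸ H, IsSeqCompact ((QuotientGroup.mk : G → G ⧸ H) ⁻¹' {y})) ∧
          SeparableSpace (G ⧸ H) ∧ MetrizableSpace (G ⧸ H) :=
  omegaNarrow_and_strictQSpace_iff_general G
end

section
/- Let G be a Hausdorff topological group which is ω-balanced and a q-space. Then for each open neighborhood O of the identity in G there exists a countably compact invariant (normal) subgroup H of G which is of countable character in G and satisfies H ⊆ O. -/
open Filter Topology Set Pointwise TopologicalSpace

universe u

/-!
Recursively choose open neighbourhoods `N k` of `1` with `N (k+1)` symmetric,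
`N (k+1) * N (k+1) ⊆ N k`, `N k ⊆ Q k` for a q-sequence `Q` at `1`, `N 0 ⊆ O`, and
`N (Nat.pair j i + 1)` inside the `i`-th member of a countable family witnessing
ω-balancedness for `N j`. Then `H = ⋂ k, N k` is a subgroup, normal by the last condition. Since
`closure (N (k+1)) ⊆ N k`, every sequence with `u n ∈ N n` clusters at a point of `H`; applied to
points of `H` this gives countable compactness, and applied to points outside a neighbourhood of
`H` it shows that the `N k` form a base at `H`.
-/

section RefiningSeq

variable {α : Type*} [SemilatticeInf α] (a : α) (q : ℕ → α) (s : α → α) (e : α → ℕ → α)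

/-- Step `k + 1`, with `k = Nat.pair j i`, refines `e (refiningSeq j) i`, so that every member of
every family `e (refiningSeq j)` eventually contains a term of the sequence. -/
noncomputable def refiningSeq : ℕ → α
  | 0 => a ⊓ q 0
  | k + 1 => s (refiningSeq k ⊓ e (refiningSeq k.unpair.1) k.unpair.2 ⊓ q (k + 1))
decreasing_by
  · exact Nat.lt_succ_self k
  · exact Nat.lt_succ_of_le (Nat.unpair_left_le k)

theorem refiningSeq_zero : refiningSeq a q s e 0 = a ⊓ q 0 := by
  rw [refiningSeq]

theorem refiningSeq_succ (k : ℕ) : refiningSeq a q s e (k + 1) =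
    s (refiningSeq a q s e k ⊓ e (refiningSeq a q s e k.unpair.1) k.unpair.2 ⊓ q (k + 1)) := by
  rw [refiningSeq]

variable {s}

theorem refiningSeq_succ_le_inf (hs : ∀ x, s x ≤ x) (k : ℕ) : refiningSeq a q s e (k + 1) ≤
    refiningSeq a q s e k ⊓ e (refiningSeq a q s e k.unpair.1) k.unpair.2 ⊓ q (k + 1) := by
  rw [refiningSeq_succ]
  exact hs _

theorem refiningSeq_le (hs : ∀ x, s x ≤ x) (k : ℕ) : refiningSeq a q s e k ≤ q k := by
  cases k with
  | zero => exact (refiningSeq_zero a q s e).trans_le inf_le_right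
  | succ k => exact (refiningSeq_succ_le_inf a q e hs k).trans inf_le_right

theorem refiningSeq_pair_succ_le (hs : ∀ x, s x ≤ x) (j i : ℕ) :
    refiningSeq a q s e (Nat.pair j i + 1) ≤ e (refiningSeq a q s e j) i := by
  simpa only [Nat.unpair_pair] using
    (refiningSeq_succ_le_inf a q e hs (Nat.pair j i)).trans (inf_le_left.trans inf_le_right)

end RefiningSeq

section NestedIntersection

variable {X : Type*} [TopologicalSpace X] {W : ℕ → Set X}

theorem IsQSequenceAt.exists_mem_iInter_mapClusterPt {x : X} {Q : ℕ → Set X}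
    (hQ : IsQSequenceAt x Q) (hWQ : ∀ k, W k ⊆ Q k) (hW : ∀ k, closure (W (k + 1)) ⊆ W k)
    (u : ℕ → X) (hu : ∀ n, u n ∈ W n) : ∃ p ∈ ⋂ k, W k, MapClusterPt p atTop u := by
  obtain ⟨p, hp⟩ := hQ.2 u fun n => hWQ n (hu n)
  have hanti : Antitone W := antitone_nat_of_succ_le fun k => subset_closure.trans (hW k)
  refine ⟨p, mem_iInter.2 fun k => hW k (isClosed_closure.mem_of_mapClusterPt hp ?_), hp⟩
  filter_upwards [eventually_ge_atTop (k + 1)] with n hn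
  exact subset_closure (hanti hn (hu n))

theorem isCountablyCompactIn_iInter
    (hW : ∀ u : ℕ → X, (∀ n, u n ∈ W n) → ∃ p ∈ ⋂ k, W k, MapClusterPt p atTop u) :
    IsCountablyCompactIn (⋂ k, W k) := by
  intro U hU hcover
  by_contra! hfin
  choose u huW huU using fun n => not_subset.1 (hfin (Finset.range (n + 1)))
  obtain ⟨p, hpW, hp⟩ := hW u fun n => mem_iInter.1 (huW n) n
  obtain ⟨m, hpm⟩ := mem_iUnion.1 (hcover hpW)
  obtain ⟨n, hmn, hn⟩ :=
    frequently_atTop.1 (mapClusterPt_iff_frequently.1 hp _ ((hU m).mem_nhds hpm)) m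
  exact huU n (mem_biUnion (Finset.mem_range.2 (Nat.lt_succ_of_le hmn)) hn)

theorem hasCountableCharacter_iInter (hWo : ∀ n, IsOpen (W n))
    (hW : ∀ u : ℕ → X, (∀ n, u n ∈ W n) → ∃ p ∈ ⋂ k, W k, MapClusterPt p atTop u) :
    HasCountableCharacter (⋂ k, W k) := by
  refine ⟨W, fun n => ⟨hWo n, iInter_subset W n⟩, fun O hO hWO => ?_⟩
  by_contra! hsub
  choose u huW huO using fun n => not_subset.1 (hsub n)
  obtain ⟨p, hpW, hp⟩ := hW u huW
  obtain ⟨n, hn⟩ := (mapClusterPt_iff_frequently.1 hp O (hO.mem_nhds (hWO hpW))).exists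
  exact huO n hn

end NestedIntersection

section NestedSubgroup

variable {G : Type*} [Group G]

def iInterSubgroup (W : ℕ → Set G) (one_mem : ∀ k, (1 : G) ∈ W k)
    (mul_subset : ∀ k, W (k + 1) * W (k + 1) ⊆ W k) (inv_subset : ∀ k, (W (k + 1))⁻¹ ⊆ W k) :
    Subgroup G where
  carrier := ⋂ k, W k
  one_mem' := mem_iInter.2 one_mem
  mul_mem' ha hb := mem_iInter.2 fun k =>
    mul_subset k (mul_mem_mul (mem_iInter.1 ha (k + 1)) (mem_iInter.1 hb (k + 1)))
  inv_mem' ha := mem_iInter.2 fun k => inv_subset k (inv_mem_inv.2 (mem_iInter.1 ha (k + 1)))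

theorem iInterSubgroup_normal {W : ℕ → Set G} (one_mem : ∀ k, (1 : G) ∈ W k)
    (mul_subset : ∀ k, W (k + 1) * W (k + 1) ⊆ W k) (inv_subset : ∀ k, (W (k + 1))⁻¹ ⊆ W k)
    (conj : ∀ k (g : G), ∃ j, ∀ v ∈ W j, g * v * g⁻¹ ∈ W k) :
    (iInterSubgroup W one_mem mul_subset inv_subset).Normal := by
  refine ⟨fun a ha g => mem_iInter.2 fun k => ?_⟩
  obtain ⟨j, hj⟩ := conj k g
  exact hj a (mem_iInter.1 ha j)

end NestedSubgroup

section TopologicalGroup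

variable {G : Type*} [Group G] [TopologicalSpace G]

theorem exists_openNhdsOf_one_inv_eq_mul_subset [IsTopologicalGroup G] (U : OpenNhdsOf (1 : G)) :
    ∃ V : OpenNhdsOf (1 : G), (V : Set G)⁻¹ = V ∧ (V : Set G) * V ⊆ U := by
  obtain ⟨V, hVo, hV1, hVU⟩ := exists_open_nhds_one_mul_subset (U.isOpen.mem_nhds U.mem)
  refine ⟨⟨⟨V ∩ V⁻¹, hVo.inter hVo.inv⟩, hV1, by simpa using hV1⟩, ?_, ?_⟩
  · change (V ∩ V⁻¹)⁻¹ = V ∩ V⁻¹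
    rw [inter_inv, inv_inv, inter_comm]
  · exact (mul_subset_mul inter_subset_left inter_subset_left).trans hVU

theorem OmegaBalanced.exists_seq_openNhdsOf (hb : OmegaBalanced G) (U : OpenNhdsOf (1 : G)) :
    ∃ e : ℕ → OpenNhdsOf (1 : G), ∀ x : G, ∃ i, ∀ v ∈ e i, x * v * x⁻¹ ∈ U := by
  obtain ⟨γ, hγc, hγo, hγx⟩ := hb U (U.isOpen.mem_nhds U.mem)
  obtain ⟨e, rfl⟩ := hγc.exists_eq_range ⟨_, (hγx 1).choose_spec.1⟩
  refine ⟨fun i => ⟨⟨e i, (hγo _ ⟨i, rfl⟩).1⟩, (hγo _ ⟨i, rfl⟩).2⟩, fun x => ?_⟩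
  obtain ⟨_, ⟨i, rfl⟩, hi⟩ := hγx x
  exact ⟨i, hi⟩

section RefiningSeq

variable (a : OpenNhdsOf (1 : G)) (q : ℕ → OpenNhdsOf (1 : G))
  {s : OpenNhdsOf (1 : G) → OpenNhdsOf (1 : G)} (e : OpenNhdsOf (1 : G) → ℕ → OpenNhdsOf (1 : G))

local notation "N" => (refiningSeq a q s e : ℕ → OpenNhdsOf (1 : G))

theorem refiningSeq_succ_mul_self_subset (hs : ∀ U, (s U : Set G) * s U ⊆ U) (k : ℕ) :
    (N (k + 1) : Set G) * N (k + 1) ⊆ N k := by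
  rw [refiningSeq_succ]
  exact (hs _).trans (SetLike.coe_subset_coe.2 (inf_le_left.trans inf_le_left))

theorem refiningSeq_succ_inv_subset (hs_inv : ∀ U, (s U : Set G)⁻¹ = s U) (hs : ∀ U, s U ≤ U)
    (k : ℕ) : (N (k + 1) : Set G)⁻¹ ⊆ N k := by
  rw [refiningSeq_succ, hs_inv, ← refiningSeq_succ a q s e]
  exact SetLike.coe_subset_coe.2 ((refiningSeq_succ_le_inf a q e hs k).trans
    (inf_le_left.trans inf_le_left))

theorem exists_conj_mem_refiningSeq (hs : ∀ U, s U ≤ U)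
    (he : ∀ U (x : G), ∃ i, ∀ v ∈ e U i, x * v * x⁻¹ ∈ U) (k : ℕ) (g : G) :
    ∃ j, ∀ v ∈ N j, g * v * g⁻¹ ∈ N k := by
  obtain ⟨i, hi⟩ := he (N k) g
  exact ⟨_, fun v hv => hi v (refiningSeq_pair_succ_le a q e hs k i hv)⟩

end RefiningSeq

end TopologicalGroup

theorem exists_countablyCompact_normal_subgroup_general (G : Type*) [Group G] [TopologicalSpace G] [IsTopologicalGroup G]
    (hb : OmegaBalanced G) (hq : QSpace G) :
    ∀ O : Set G, IsOpen O → (1 : G) ∈ O →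
      ∃ H : Subgroup G, H.Normal ∧ IsCountablyCompactIn (H : Set G) ∧
        HasCountableCharacter (H : Set G) ∧ (H : Set G) ⊆ O := by
  intro O hO hO1
  obtain ⟨Q, hQ⟩ := hq 1
  choose s hs_inv hs_mul using exists_openNhdsOf_one_inv_eq_mul_subset (G := G)
  have hs : ∀ U, s U ≤ U := fun U => (subset_mul_left _ (s U).mem).trans (hs_mul U)
  choose e he using hb.exists_seq_openNhdsOf
  let a : OpenNhdsOf (1 : G) := ⟨⟨O, hO⟩, hO1⟩
  let q : ℕ → OpenNhdsOf (1 : G) := fun n => ⟨⟨Q n, (hQ.1 n).1⟩, (hQ.1 n).2⟩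
  let N := refiningSeq a q s e
  have mul_subset := refiningSeq_succ_mul_self_subset a q e hs_mul
  have inv_subset := refiningSeq_succ_inv_subset a q e hs_inv hs
  have cluster := hQ.exists_mem_iInter_mapClusterPt (W := fun k => N k)
    (refiningSeq_le a q e hs) fun k =>
      (closure_subset_mul_self_of_mem_nhds_one ((N (k + 1)).isOpen.mem_nhds (N (k + 1)).mem)).trans
        (mul_subset k)
  refine ⟨iInterSubgroup (fun k => N k) (fun k => (N k).mem) mul_subset inv_subset,
    iInterSubgroup_normal _ _ _ (exists_conj_mem_refiningSeq a q e hs he),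
    isCountablyCompactIn_iInter cluster,
    hasCountableCharacter_iInter (fun k => (N k).isOpen) cluster, ?_⟩
  exact (iInter_subset _ 0).trans ((refiningSeq_zero a q s e).trans_le inf_le_left)

theorem exists_countablyCompact_normal_subgroup (G : Type*) [Group G] [TopologicalSpace G] [IsTopologicalGroup G] [T2Space G]
    (hb : OmegaBalanced G) (hq : QSpace G) :
    ∀ O : Set G, IsOpen O → (1 : G) ∈ O →
      ∃ H : Subgroup G, H.Normal ∧ IsCountablyCompactIn (H : Set G) ∧
        HasCountableCharacter (H : Set G) ∧ (H : Set G) ⊆ O :=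
  exists_countablyCompact_normal_subgroup_general G hb hq
end

section
/- Let G be a Hausdorff topological group and H a closed subgroup of G of countable character in G. Then the quotient space G/H is first-countable. -/
open Filter Topology Set Pointwise TopologicalSpace

universe u

/-!
Let `π : G → G ⧸ H` be the quotient map. It is continuous and open, so if `Uₙ` is a countable
base of open neighbourhoods of the fibre `π⁻¹(π g)`, the open sets `π(Uₙ)` form a neighbourhood
base at `π g`: any neighbourhood `W` of `π g` pulls back to a neighbourhood of the fibre,
which contains some `Uₙ`. The fibres are the cosets `gH`, the images of `H` under left
translation, so all of them have countable character.
-/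

section

variable {X Y : Type*} [TopologicalSpace X] [TopologicalSpace Y]

theorem HasCountableCharacter.image_homeomorph {A : Set X} (hA : HasCountableCharacter A)
    (e : X ≃ₜ Y) : HasCountableCharacter (e '' A) := by
  obtain ⟨U, hU, hbasis⟩ := hA
  refine ⟨fun n => e '' U n, fun n => ⟨e.isOpenMap _ (hU n).1, image_mono (hU n).2⟩, ?_⟩
  intro W hW hAW
  obtain ⟨n, hn⟩ := hbasis (e ⁻¹' W) (hW.preimage e.continuous) (image_subset_iff.1 hAW)
  exact ⟨n, image_subset_iff.2 hn⟩

theorem IsOpenMap.isCountablyGenerated_nhds_of_hasCountableCharacter {f : X → Y}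
    (hfo : IsOpenMap f) (hfc : Continuous f) (x : X)
    (hx : HasCountableCharacter (f ⁻¹' {f x})) : (𝓝 (f x)).IsCountablyGenerated := by
  obtain ⟨U, hU, hbasis⟩ := hx
  have hbasis_nhds : (𝓝 (f x)).HasBasis (fun _ : ℕ => True) (fun n => f '' U n) := by
    refine ⟨fun W => ⟨fun hW => ?_, fun ⟨n, _, hn⟩ => ?_⟩⟩
    · obtain ⟨V, hVW, hV, hxV⟩ := mem_nhds_iff.1 hW
      obtain ⟨n, hn⟩ := hbasis (f ⁻¹' V) (hV.preimage hfc) fun y hy => by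
        rwa [mem_preimage, mem_singleton_iff.1 hy]
      exact ⟨n, trivial, (image_subset_iff.2 hn).trans hVW⟩
    · exact mem_of_superset
        ((hfo _ (hU n).1).mem_nhds (mem_image_of_mem f ((hU n).2 rfl))) hn
  exact hbasis_nhds.isCountablyGenerated

theorem IsOpenQuotientMap.firstCountableTopology_of_hasCountableCharacter {f : X → Y}
    (hf : IsOpenQuotientMap f) (hfib : ∀ y, HasCountableCharacter (f ⁻¹' {y})) :
    FirstCountableTopology Y where
  nhds_generated_countable y := by
    obtain ⟨x, rfl⟩ := hf.surjective y
    exact hf.isOpenMap.isCountablyGenerated_nhds_of_hasCountableCharacter hf.continuous x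
      (hfib _)

end

theorem QuotientGroup.preimage_mk_singleton_mk {G : Type*} [Group G] (H : Subgroup G) (g : G) :
    ((↑) : G → G ⧸ H) ⁻¹' {(g : G ⧸ H)} = g • (H : Set G) := by
  ext x
  rw [mem_preimage, mem_singleton_iff, eq_comm, QuotientGroup.eq, mem_leftCoset_iff]
  rfl

theorem quotient_firstCountable_of_countableCharacter_general (G : Type*) [Group G] [TopologicalSpace G] [IsTopologicalGroup G]
    (H : Subgroup G)
    (hch : HasCountableCharacter (H : Set G)) :
    FirstCountableTopology (G ⧸ H) := by
  refine QuotientGroup.isOpenQuotientMap_mk.firstCountableTopology_of_hasCountableCharacter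
    fun y => ?_
  induction y using QuotientGroup.induction_on with
  | H g =>
    rw [QuotientGroup.preimage_mk_singleton_mk]
    exact hch.image_homeomorph (Homeomorph.mulLeft g)

theorem quotient_firstCountable_of_countableCharacter (G : Type*) [Group G] [TopologicalSpace G] [IsTopologicalGroup G] [T2Space G]
    (H : Subgroup G) (hcl : IsClosed (H : Set G))
    (hch : HasCountableCharacter (H : Set G)) :
    FirstCountableTopology (G ⧸ H) :=
  quotient_firstCountable_of_countableCharacter_general G H hch
end

section
/- Let G be a Hausdorff topological group and H a subgroup of G such that for every open set U with H ⊆ U there exists an open symmetric set V (i.e. V = V⁻¹) containing the identity with H ⊆ V and V·V ⊆ U. Then the canonical quotient mapping p : G → G/H is a closed map, and H is a neutral subgroup of G. -/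
open Filter Topology Set Pointwise TopologicalSpace

universe u

/-!
A point `x ∉ F * H` gives an open set `x⁻¹ • Fᶜ ⊇ H`; if it contains `V * H` for a neighbourhood
`V` of `1`, then `x • V` misses `F * H`, so the saturation `F * H` of a closed set `F` is closed.
Neutrality is the analogous condition `H * V ⊆ W` for the open set `W = U * H ⊇ H`. The hypothesis
gives both, since `V * H` and `H * V` lie in `V * V`.
-/

namespace Subgroup

variable {G : Type*} [Group G] [TopologicalSpace G] [ContinuousMul G] {H : Subgroup G}

theorem isClosed_mul_of_forall_isOpen
    (hH : ∀ W : Set G, IsOpen W → (H : Set G) ⊆ W → ∃ V ∈ 𝓝 (1 : G), V * (H : Set G) ⊆ W)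
    {F : Set G} (hF : IsClosed F) : IsClosed (F * (H : Set G)) := by
  rw [← isOpen_compl_iff, isOpen_iff_mem_nhds]
  intro x hx
  have hHx : (H : Set G) ⊆ x⁻¹ • Fᶜ := fun k hk => Set.mem_inv_smul_set_iff.2 fun hxk =>
    hx ⟨x * k, hxk, k⁻¹, H.inv_mem hk, mul_inv_cancel_right x k⟩
  obtain ⟨V, hV, hVH⟩ := hH _ (hF.isOpen_compl.smul _) hHx
  have hxV : x • V ∈ 𝓝 x := by simpa using (smul_mem_nhds_smul_iff x).2 hV
  filter_upwards [hxV]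
  rintro _ ⟨v, hv, rfl⟩ ⟨f, hf, k, hk, hfk : f * k = x * v⟩
  have hvk : x * (v * k⁻¹) = f := by rw [← mul_assoc, ← hfk, mul_inv_cancel_right]
  have hmem : v * k⁻¹ ∈ x⁻¹ • Fᶜ := hVH ⟨v, hv, k⁻¹, H.inv_mem hk, rfl⟩
  exact Set.mem_inv_smul_set_iff.1 hmem (by rwa [smul_eq_mul, hvk])

theorem isClosedMap_mk_of_forall_isOpen
    (hH : ∀ W : Set G, IsOpen W → (H : Set G) ⊆ W → ∃ V ∈ 𝓝 (1 : G), V * (H : Set G) ⊆ W) :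
    IsClosedMap (QuotientGroup.mk : G → G ⧸ H) := fun F hF => by
  rw [← (QuotientGroup.isQuotientMap_mk H).isClosed_preimage,
    QuotientGroup.preimage_image_mk_eq_mul]
  exact isClosed_mul_of_forall_isOpen hH hF

theorem isNeutralSubgroup_of_forall_isOpen
    (hH : ∀ W : Set G, IsOpen W → (H : Set G) ⊆ W →
      ∃ V : Set G, IsOpen V ∧ (1 : G) ∈ V ∧ (H : Set G) * V ⊆ W) :
    IsNeutralSubgroup H := fun _ hU hU1 =>
  hH _ hU.mul_right (Set.subset_mul_right _ hU1)

end Subgroup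

theorem closedMap_and_neutral_of_symmetric_base_general (G : Type*) [Group G] [TopologicalSpace G] [IsTopologicalGroup G] (H : Subgroup G)
    (h : ∀ U : Set G, IsOpen U → (H : Set G) ⊆ U →
      ∃ V : Set G, IsOpen V ∧ (1 : G) ∈ V ∧ V⁻¹ = V ∧ (H : Set G) ⊆ V ∧ V * V ⊆ U) :
    IsClosedMap (QuotientGroup.mk : G → G ⧸ H) ∧ IsNeutralSubgroup H := by
  constructor
  · refine H.isClosedMap_mk_of_forall_isOpen fun W hW hHW => ?_
    obtain ⟨V, hVo, hV1, -, hHV, hVV⟩ := h W hW hHW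
    exact ⟨V, hVo.mem_nhds hV1, (Set.mul_subset_mul_left hHV).trans hVV⟩
  · refine H.isNeutralSubgroup_of_forall_isOpen fun W hW hHW => ?_
    obtain ⟨V, hVo, hV1, -, hHV, hVV⟩ := h W hW hHW
    exact ⟨V, hVo, hV1, (Set.mul_subset_mul_right hHV).trans hVV⟩

theorem closedMap_and_neutral_of_symmetric_base (G : Type*) [Group G] [TopologicalSpace G] [IsTopologicalGroup G] [T2Space G] (H : Subgroup G)
    (h : ∀ U : Set G, IsOpen U → (H : Set G) ⊆ U →
      ∃ V : Set G, IsOpen V ∧ (1 : G) ∈ V ∧ V⁻¹ = V ∧ (H : Set G) ⊆ V ∧ V * V ⊆ U) :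
    IsClosedMap (QuotientGroup.mk : G → G ⧸ H) ∧ IsNeutralSubgroup H :=
  closedMap_and_neutral_of_symmetric_base_general G H h
end
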